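/- arXiv:1902.09182 — 2 statements merged into one kernel-verified Lean document; each statement's English description precedes it below -/
import Mathlib

section
/- Let A and B be finite graphs and let i : A → B be an induced subgraph inclusion that is a ×-homotopy equivalence with |V(A)| < |V(B)|. Suppose B cannot be reduced to A by any finite sequence of relative folds with respect to A. Then the cobase change of i is not always a ×-homotopy equivalence: there exist a graph C and a graph map f : A → C such that the cobase change i′ : C → G of i along f is not a ×-homotopy equivalence. -/
/-- A graph: vertex type `V` with a symmetric adjacency relation; loops are allowed. -/
structure LoopGraph (V : Type) : Type where
  adj : V → V → Prop
  symm : ∀ {x y : V}, adj x y → adj y x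

/-- A graph map: a vertex function preserving edges. -/
def IsGraphHom {V W : Type} (G : LoopGraph V) (H : LoopGraph W) (f : V → W) : Prop :=
  ∀ ⦃x y : V⦄, G.adj x y → H.adj (f x) (f y)

/-- The categorical product of graphs. -/
def LoopGraph.prod {V W : Type} (G : LoopGraph V) (H : LoopGraph W) : LoopGraph (V × W) where
  adj p q := G.adj p.1 q.1 ∧ H.adj p.2 q.2
  symm h := ⟨G.symm h.1, H.symm h.2⟩

/-- The graph `I_n` on vertices `{0,…,n}` with `i ~ j` iff `|i-j| ≤ 1` (all vertices looped). -/
def pathI (n : ℕ) : LoopGraph (Fin (n + 1)) where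
  adj i j := (i : ℕ) ≤ (j : ℕ) + 1 ∧ (j : ℕ) ≤ (i : ℕ) + 1
  symm h := ⟨h.2, h.1⟩

/-- `f` and `g` are ×-homotopic. -/
def Homotopic {V W : Type} (G : LoopGraph V) (H : LoopGraph W) (f g : V → W) : Prop :=
  ∃ (n : ℕ) (F : V × Fin (n + 1) → W),
    IsGraphHom (G.prod (pathI n)) H F ∧ (∀ a, F (a, 0) = f a) ∧ (∀ a, F (a, Fin.last n) = g a)

/-- `f` is a ×-homotopy equivalence. -/
def IsHtpyEquiv {V W : Type} (G : LoopGraph V) (H : LoopGraph W) (f : V → W) : Prop :=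
  IsGraphHom G H f ∧ ∃ g : W → V, IsGraphHom H G g ∧
    Homotopic G G (g ∘ f) id ∧ Homotopic H H (f ∘ g) id

/-- A graph is connected if any two vertices are joined by a path of edges. -/
def LoopGraph.Connected {V : Type} (G : LoopGraph V) : Prop :=
  ∀ x y : V, Relation.ReflTransGen G.adj x y

/-- `i : A → B` is an unfold: an induced-subgraph inclusion adding exactly one new vertex `v`
with `N(v) ⊆ N(i v')` for some vertex `v'` of `A`. -/
def IsUnfold {A B : Type} (GA : LoopGraph A) (GB : LoopGraph B) (i : A → B) : Prop :=
  Function.Injective i ∧ (∀ x y : A, GA.adj x y ↔ GB.adj (i x) (i y)) ∧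
  ∃ v : B, v ∉ Set.range i ∧ (∀ b : B, b ∉ Set.range i → b = v) ∧
    ∃ v' : A, ∀ b : B, GB.adj v b → GB.adj (i v') b

/-- Relation generating the pushout of `i : A → B` along `f : A → C`. -/
def pushoutRel {A B C : Type} (i : A → B) (f : A → C) : B ⊕ C → B ⊕ C → Prop :=
  fun x y => ∃ a : A, x = Sum.inl (i a) ∧ y = Sum.inr (f a)

/-- Vertex set of the pushout. -/
def Pushout {A B C : Type} (i : A → B) (f : A → C) : Type :=
  Quot (pushoutRel i f)

/-- Adjacency on a disjoint union. -/
def sumAdj {B C : Type} (GB : LoopGraph B) (GC : LoopGraph C) (x y : B ⊕ C) : Prop :=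
  (∃ b b', x = Sum.inl b ∧ y = Sum.inl b' ∧ GB.adj b b') ∨
  (∃ c c', x = Sum.inr c ∧ y = Sum.inr c' ∧ GC.adj c c')

/-- The pushout graph of `i : A → B` along `f : A → C`: classes are adjacent iff some
representatives are adjacent in `B` or in `C`. -/
def pushoutGraph {A B C : Type} (GB : LoopGraph B) (GC : LoopGraph C) (i : A → B) (f : A → C) :
    LoopGraph (Pushout i f) where
  adj x y := ∃ u v : B ⊕ C,
    Quot.mk (pushoutRel i f) u = x ∧ Quot.mk (pushoutRel i f) v = y ∧ sumAdj GB GC u v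
  symm := by
    rintro x y ⟨u, v, hu, hv, h⟩
    refine ⟨v, u, hv, hu, ?_⟩
    rcases h with ⟨b, b', rfl, rfl, hbb⟩ | ⟨c, c', rfl, rfl, hcc⟩
    · exact Or.inl ⟨b', b, rfl, rfl, GB.symm hbb⟩
    · exact Or.inr ⟨c', c, rfl, rfl, GC.symm hcc⟩

/-- The cobase change `C → B ⊔_A C` of `i` along `f`. -/
def cobase {A B C : Type} (i : A → B) (f : A → C) : C → Pushout i f :=
  fun c => Quot.mk (pushoutRel i f) (Sum.inr c)

/-- The map `a ↦ (a,0)` into the cylinder `A × I_n`. -/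
def cyl0 {A : Type} (n : ℕ) : A → A × Fin (n + 1) := fun a => (a, 0)

/-- The canonical map `(A × I_n) ⊔_i B → B × I_n`, induced by `(a,t) ↦ (i a, t)`, `b ↦ (b,0)`. -/
def cylJ {A B : Type} (i : A → B) (n : ℕ) : Pushout (cyl0 (A := A) n) i → B × Fin (n + 1) :=
  Quot.lift (Sum.elim (fun p => (i p.1, p.2)) (fun b => (b, (0 : Fin (n + 1)))))
    (by rintro x y ⟨a, rfl, rfl⟩; rfl)

/-- `i : A → B` has the homotopy extension property for homotopies of length `n`. -/
def HEP {A B : Type} (GA : LoopGraph A) (GB : LoopGraph B) (i : A → B) (n : ℕ) : Prop :=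
  ∀ (Z : Type) (GZ : LoopGraph Z) (f : A → Z) (g : B → Z),
    IsGraphHom GA GZ f → IsGraphHom GB GZ g → (∀ a, g (i a) = f a) →
    ∀ F : A × Fin (n + 1) → Z, IsGraphHom (GA.prod (pathI n)) GZ F → (∀ a, F (a, 0) = f a) →
    ∃ G : B × Fin (n + 1) → Z, IsGraphHom (GB.prod (pathI n)) GZ G ∧
      (∀ b, G (b, 0) = g b) ∧ (∀ a t, G (i a, t) = F (a, t))

/-- `FoldsTo G S`: the graph `G` can be reduced by a finite sequence of folds to the
induced subgraph on the vertex set `S`. -/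
inductive FoldsTo {V : Type} (G : LoopGraph V) : Set V → Prop
  | univ : FoldsTo G Set.univ
  | step {S : Set V} {v v' : V} : FoldsTo G S → v ∈ S → v' ∈ S → v ≠ v' →
      (∀ x ∈ S, G.adj v x → G.adj v' x) → FoldsTo G (S \ {v})

/-- `RelFoldsTo G A S`: `G` can be reduced to the induced subgraph on `S` by a finite
sequence of folds relative to `A` (never removing a vertex of `A`). -/
inductive RelFoldsTo {V : Type} (G : LoopGraph V) (A : Set V) : Set V → Prop
  | univ : RelFoldsTo G A Set.univ
  | step {S : Set V} {v v' : V} : RelFoldsTo G A S → v ∈ S → v ∉ A → v' ∈ S → v ≠ v' →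
      (∀ x ∈ S, G.adj v x → G.adj v' x) → RelFoldsTo G A (S \ {v})

/-- `p : X → Y` has the right lifting property with respect to every unfold. -/
def RLPunfolds {X Y : Type} (GX : LoopGraph X) (GY : LoopGraph Y) (p : X → Y) : Prop :=
  ∀ (A B : Type) (GA : LoopGraph A) (GB : LoopGraph B) (i : A → B), IsUnfold GA GB i →
    ∀ (f : A → X) (g : B → Y), IsGraphHom GA GX f → IsGraphHom GB GY g →
      (∀ a, p (f a) = g (i a)) →
      ∃ h : B → X, IsGraphHom GB GX h ∧ (∀ a, h (i a) = f a) ∧ ∀ b, p (h b) = g b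

/-- The graph `L_n`: the path `0 - 1 - ⋯ - n` with a loop at `0`. -/
def Lgraph (t : ℕ) : LoopGraph (Fin (t + 1)) where
  adj x y := ((x : ℕ) + 1 = (y : ℕ) ∨ (y : ℕ) + 1 = (x : ℕ)) ∨ ((x : ℕ) = 0 ∧ (y : ℕ) = 0)
  symm := by tauto

/-- The graph `I_0`: a single looped vertex. -/
def I0 : LoopGraph Unit where
  adj _ _ := True
  symm h := h

/-- The constant graph map `p_n : L_n → I_0`. -/
def pL (n : ℕ) : Fin (n + 1) → Unit := fun _ => ()

/-- An object of the category of finite graphs. -/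
structure FinGraph : Type where
  n : ℕ
  G : LoopGraph (Fin n)

/-- A class of morphisms in the category of finite graphs. -/
def MorClass : Type :=
  ∀ (A B : FinGraph), (Fin A.n → Fin B.n) → Prop

/-- `f : A → B` is a retract of `g : X → Y` in the arrow category. -/
def IsRetractOf (A B X Y : FinGraph) (f : Fin A.n → Fin B.n) (g : Fin X.n → Fin Y.n) : Prop :=
  ∃ (iA : Fin A.n → Fin X.n) (rA : Fin X.n → Fin A.n)
    (iB : Fin B.n → Fin Y.n) (rB : Fin Y.n → Fin B.n),
    IsGraphHom A.G X.G iA ∧ IsGraphHom X.G A.G rA ∧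
    IsGraphHom B.G Y.G iB ∧ IsGraphHom Y.G B.G rB ∧
    (∀ a, rA (iA a) = a) ∧ (∀ b, rB (iB b) = b) ∧
    (∀ a, g (iA a) = iB (f a)) ∧ (∀ x, f (rA x) = rB (g x))

/-- A class of morphisms is closed under retracts. -/
def RetractClosed (S : MorClass) : Prop :=
  ∀ (A B X Y : FinGraph) (f : Fin A.n → Fin B.n) (g : Fin X.n → Fin Y.n),
    IsGraphHom A.G B.G f → IsGraphHom X.G Y.G g →
    IsRetractOf A B X Y f g → S X Y g → S A B f

/-- `i` has the left lifting property with respect to `p` (in the category of finite graphs). -/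
def HasLift (A B X Y : FinGraph) (i : Fin A.n → Fin B.n) (p : Fin X.n → Fin Y.n) : Prop :=
  ∀ (f : Fin A.n → Fin X.n) (g : Fin B.n → Fin Y.n),
    IsGraphHom A.G X.G f → IsGraphHom B.G Y.G g → (∀ a, p (f a) = g (i a)) →
    ∃ h : Fin B.n → Fin X.n, IsGraphHom B.G X.G h ∧ (∀ a, h (i a) = f a) ∧ ∀ b, p (h b) = g b

/-- A model structure on the category of finite graphs: classes `W`, `Cof`, `Fib` of graph maps,
each closed under retracts, with two-out-of-three for `W`, the lifting axioms, and the two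
factorization axioms. -/
structure ModelStructure (W Cof Fib : MorClass) : Prop where
  w_hom : ∀ A B f, W A B f → IsGraphHom A.G B.G f
  c_hom : ∀ A B f, Cof A B f → IsGraphHom A.G B.G f
  f_hom : ∀ A B f, Fib A B f → IsGraphHom A.G B.G f
  w_retract : RetractClosed W
  c_retract : RetractClosed Cof
  f_retract : RetractClosed Fib
  two_of_three_comp : ∀ (A B D : FinGraph) (f : Fin A.n → Fin B.n) (g : Fin B.n → Fin D.n),
    IsGraphHom A.G B.G f → IsGraphHom B.G D.G g → W A B f → W B D g → W A D (g ∘ f)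
  two_of_three_right : ∀ (A B D : FinGraph) (f : Fin A.n → Fin B.n) (g : Fin B.n → Fin D.n),
    IsGraphHom A.G B.G f → IsGraphHom B.G D.G g → W A B f → W A D (g ∘ f) → W B D g
  two_of_three_left : ∀ (A B D : FinGraph) (f : Fin A.n → Fin B.n) (g : Fin B.n → Fin D.n),
    IsGraphHom A.G B.G f → IsGraphHom B.G D.G g → W B D g → W A D (g ∘ f) → W A B f
  lift_cw_f : ∀ (A B X Y : FinGraph) (i : Fin A.n → Fin B.n) (p : Fin X.n → Fin Y.n),
    Cof A B i → W A B i → Fib X Y p → HasLift A B X Y i p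
  lift_c_fw : ∀ (A B X Y : FinGraph) (i : Fin A.n → Fin B.n) (p : Fin X.n → Fin Y.n),
    Cof A B i → Fib X Y p → W X Y p → HasLift A B X Y i p
  fact_c_fw : ∀ (A B : FinGraph) (f : Fin A.n → Fin B.n), IsGraphHom A.G B.G f →
    ∃ (Z : FinGraph) (c : Fin A.n → Fin Z.n) (p : Fin Z.n → Fin B.n),
      Cof A Z c ∧ Fib Z B p ∧ W Z B p ∧ ∀ a, p (c a) = f a
  fact_cw_f : ∀ (A B : FinGraph) (f : Fin A.n → Fin B.n), IsGraphHom A.G B.G f →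
    ∃ (Z : FinGraph) (c : Fin A.n → Fin Z.n) (p : Fin Z.n → Fin B.n),
      Cof A Z c ∧ W A Z c ∧ Fib Z B p ∧ ∀ a, p (c a) = f a

/-- The class of ×-homotopy equivalences of finite graphs. -/
def Whe : MorClass := fun A B f => IsHtpyEquiv A.G B.G f

/-!
Glue to every vertex `a` of `A` a rigid gadget: an unlooped pentagon one of whose edges spans a
triangle with `a`. The pushout is `B` with these gadgets at the vertices `i a`. Each vertex of the
image of `C` in it is the unique common neighbour of two others, so if `r` is a homotopy inverse of
the cobase change `i'`, a homotopy from `i' ∘ r` to the identity fixes that image pointwise.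
Running such a homotopy backwards, either its last non-identity stage is an automorphism and can be
cancelled, or it misses a vertex, which is then dominated and folded away; hence the pushout folds
onto the image of `C` relative to it. These folds only remove vertices of `B`, and each of them can
be replaced by a fold of `B` relative to `A`, except when a vertex `b` folds into the gadget at
`i a` and `b (i a)` is an isolated edge; this is ruled out by `i ∘ g ≃ id` for a homotopy inverse
`g` of `i`. So `B` folds to `A` relative to `A`.
-/

open Set Function

lemma Set.MapsTo.exists_iterate_leftInvOn {V : Type} [Finite V] {S : Set V} {h : V → V}
    (hS : MapsTo h S S) (hsurj : SurjOn h S S) : ∃ k, LeftInvOn h^[k] h S := by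
  have hbij : Bijective (hS.restrict h S S) :=
    Finite.injective_iff_bijective.1 (Finite.injective_iff_surjective.2
      (hS.restrict_surjective_iff.2 hsurj))
  set σ := Equiv.ofBijective _ hbij
  refine ⟨orderOf σ - 1, fun x hx => ?_⟩
  have hσ : (σ ^ (orderOf σ - 1 + 1)) ⟨x, hx⟩ = ⟨x, hx⟩ := by
    rw [Nat.sub_add_cancel (isOfFinOrder_of_finite σ).orderOf_pos, pow_orderOf_eq_one]; rfl
  rw [Equiv.Perm.coe_pow, iterate_succ_apply] at hσ
  have := congrArg Subtype.val hσ
  rwa [show ⇑σ = hS.restrict h S S from rfl, hS.coe_iterate_restrict] at this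

namespace LoopGraph

variable {V : Type} (G : LoopGraph V)

def AdjOn (S : Set V) (f g : V → V) : Prop :=
  ∀ ⦃x⦄, x ∈ S → ∀ ⦃y⦄, y ∈ S → G.adj x y → G.adj (f x) (g y)

variable {G}

lemma AdjOn.mono {S S' : Set V} {f g : V → V} (hS : S' ⊆ S) (h : G.AdjOn S f g) :
    G.AdjOn S' f g :=
  fun _ hx _ hy => h (hS hx) (hS hy)

lemma AdjOn.comp {S : Set V} {f g k : V → V} (hk : G.AdjOn S k k) (hf : MapsTo f S S)
    (hg : MapsTo g S S) (hfg : G.AdjOn S f g) : G.AdjOn S (k ∘ f) (k ∘ g) :=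
  fun _ hx _ hy hxy => hk (hf hx) (hg hy) (hfg hx hy hxy)

lemma AdjOn.iterate {S : Set V} {h : V → V} (hh : G.AdjOn S h h) (hS : MapsTo h S S) (k : ℕ) :
    G.AdjOn S h^[k] h^[k] := by
  induction k with
  | zero => exact fun _ _ _ _ hxy => hxy
  | succ k ih =>
    rw [iterate_succ]
    exact ih.comp hS hS hh

lemma adjOn_update_id [DecidableEq V] {S : Set V} {v w : V} (hw : w ∈ S)
    (hdom : ∀ x ∈ S, G.adj v x → G.adj w x) :
    G.AdjOn S (update id v w) (update id v w) := by
  intro x hx y hy hxy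
  by_cases hxv : x = v <;> by_cases hyv : y = v
  · subst hxv hyv
    simp only [update_self]
    exact hdom w hw (G.symm (hdom _ hx hxy))
  · subst hxv
    simpa [update_self, update_of_ne hyv] using hdom y hy hxy
  · subst hyv
    simpa [update_self, update_of_ne hxv] using G.symm (hdom x hx (G.symm hxy))
  · simpa [update_of_ne hxv, update_of_ne hyv] using hxy

lemma mapsTo_update_id [DecidableEq V] {S : Set V} {v w : V} (hw : w ∈ S) (hvw : v ≠ w) :
    MapsTo (update id v w) S (S \ {v}) := by
  intro x hx
  by_cases hxv : x = v
  · subst hxv; simpa [update_self] using ⟨hw, Ne.symm hvw⟩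
  · simpa [update_of_ne hxv] using ⟨hx, hxv⟩

end LoopGraph

namespace RelFoldsTo

open LoopGraph

variable {V : Type} {G : LoopGraph V} {R S : Set V}

lemma subset (h : RelFoldsTo G R S) : R ⊆ S := by
  induction h with
  | univ => exact subset_univ R
  | step _ _ hvR _ _ _ ih =>
    exact fun x hx => ⟨ih hx, fun hxv => hvR (mem_singleton_iff.1 hxv ▸ hx)⟩

lemma exists_retraction (h : RelFoldsTo G R S) :
    ∃ ρ : V → V, IsGraphHom G G ρ ∧ (∀ x, ρ x ∈ S) ∧ ∀ x ∈ S, ρ x = x := by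
  classical
  induction h with
  | univ => exact ⟨id, fun _ _ h => h, mem_univ, fun _ _ => rfl⟩
  | @step S v w _ hv _ hw hvw hdom ih =>
    obtain ⟨ρ, hρ, hρS, hρfix⟩ := ih
    refine ⟨update id v w ∘ ρ, fun x y hxy => adjOn_update_id hw hdom (hρS x) (hρS y) (hρ hxy),
      fun x => mapsTo_update_id hw hvw (hρS x), fun x hx => ?_⟩
    rw [comp_apply, hρfix x hx.1, update_of_ne hx.2, id]

end RelFoldsTo

namespace LoopGraph

variable {V : Type} {G : LoopGraph V}

variable (G) in
/-- The stages of a ×-homotopy of the induced subgraph on `S` relative to `T`, from a map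
into `T` to the identity. -/
structure IsRelHomotopyOn (T S : Set V) (n : ℕ) (f : ℕ → V → V) : Prop where
  mapsTo : ∀ t ≤ n, MapsTo (f t) S S
  adjOn : ∀ t ≤ n, G.AdjOn S (f t) (f t)
  adjOn_succ : ∀ t < n, G.AdjOn S (f t) (f (t + 1))
  fixes : ∀ t ≤ n, ∀ x ∈ T, f t x = x
  mapsTo_zero : MapsTo (f 0) S T
  eqOn_last : EqOn (f n) id S

namespace IsRelHomotopyOn

variable {T S : Set V} {n : ℕ} {f : ℕ → V → V}

/-- An iterate of the onto stage `f n` inverts it. -/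
lemma shorten [Finite V] (hf : G.IsRelHomotopyOn T S (n + 1) f) (hsurj : SurjOn (f n) S S) :
    ∃ g, G.IsRelHomotopyOn T S n g := by
  have hS := hf.mapsTo n n.le_succ
  obtain ⟨k, hk⟩ := hS.exists_iterate_leftInvOn hsurj
  have hkS : MapsTo (f n)^[k] S S := hS.iterate k
  have hkadj := (hf.adjOn n n.le_succ).iterate hS k
  have hkT : ∀ x ∈ T, (f n)^[k] x = x := fun x hx => iterate_fixed (hf.fixes n n.le_succ x hx) k
  exact ⟨fun t => (f n)^[k] ∘ f t,
    { mapsTo := fun t ht => hkS.comp (hf.mapsTo t (by omega))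
      adjOn := fun t ht => hkadj.comp (hf.mapsTo t (by omega)) (hf.mapsTo t (by omega))
        (hf.adjOn t (by omega))
      adjOn_succ := fun t ht => hkadj.comp (hf.mapsTo t (by omega))
        (hf.mapsTo (t + 1) (by omega)) (hf.adjOn_succ t (by omega))
      fixes := fun t ht x hx => by simp [hf.fixes t (by omega) x hx, hkT x hx]
      mapsTo_zero := fun x hx => by simpa [hkT _ (hf.mapsTo_zero hx)] using hf.mapsTo_zero hx
      eqOn_last := hk }⟩

/-- `v` is dominated by `f n v` because `f n` and `f (n + 1) = id` are adjacent stages. -/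
lemma fold [DecidableEq V] (hf : G.IsRelHomotopyOn T S (n + 1) f) {v : V} (hv : v ∈ S)
    (hmiss : v ∉ f n '' S) :
    v ∉ T ∧ f n v ∈ S ∧ v ≠ f n v ∧ (∀ x ∈ S, G.adj v x → G.adj (f n v) x) ∧
      G.IsRelHomotopyOn T (S \ {v}) (n + 1) (fun t => update id v (f n v) ∘ f t) := by
  have hw : f n v ∈ S := hf.mapsTo n n.le_succ hv
  have hvw : v ≠ f n v := fun h => hmiss ⟨v, hv, h.symm⟩
  have hvT : v ∉ T := fun h => hvw (hf.fixes n n.le_succ v h).symm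
  have hdom : ∀ x ∈ S, G.adj v x → G.adj (f n v) x := fun x hx hvx => by
    simpa [hf.eqOn_last hx] using hf.adjOn_succ n n.lt_succ_self hv hx hvx
  have hfold := adjOn_update_id hw hdom
  have hmaps := mapsTo_update_id hw hvw
  have hfixT : ∀ x ∈ T, update id v (f n v) x = x := fun x hx =>
    update_of_ne (ne_of_mem_of_not_mem hx hvT) _ _
  refine ⟨hvT, hw, hvw, hdom,
    { mapsTo := fun t ht => (hmaps.comp (hf.mapsTo t ht)).mono_left sdiff_subset
      adjOn := fun t ht =>
        (hfold.comp (hf.mapsTo t ht) (hf.mapsTo t ht) (hf.adjOn t ht)).mono sdiff_subset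
      adjOn_succ := fun t ht => (hfold.comp (hf.mapsTo t ht.le) (hf.mapsTo (t + 1) ht)
        (hf.adjOn_succ t ht)).mono sdiff_subset
      fixes := fun t ht x hx => by simp [hf.fixes t ht x hx, hfixT x hx]
      mapsTo_zero := fun x hx => by
        simpa [hfixT _ (hf.mapsTo_zero hx.1)] using hf.mapsTo_zero hx.1
      eqOn_last := fun x hx => by simp [hf.eqOn_last hx.1, update_of_ne hx.2] }⟩

end IsRelHomotopyOn
end LoopGraph

namespace RelFoldsTo

variable {V : Type} {G : LoopGraph V} {T S : Set V}

theorem of_isRelHomotopyOn [Finite V] (hS : RelFoldsTo G T S) {n : ℕ} {f : ℕ → V → V}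
    (hf : G.IsRelHomotopyOn T S n f) : RelFoldsTo G T T := by
  classical
  induction S using WellFoundedLT.induction generalizing n f with
  | _ S ihS =>
  induction n generalizing f with
  | zero =>
    have hST : S = T := hS.subset.antisymm' fun x hx => by
      simpa [hf.eqOn_last hx] using hf.mapsTo_zero hx
    exact hST ▸ hS
  | succ n ihn =>
    by_cases hsurj : SurjOn (f n) S S
    · obtain ⟨g, hg⟩ := hf.shorten hsurj
      exact ihn hg
    · obtain ⟨v, hv, hmiss⟩ := not_subset.1 hsurj
      obtain ⟨hvT, hw, hvw, hdom, hf'⟩ := hf.fold hv hmiss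
      exact ihS _ (sdiff_singleton_ssubset.2 hv) (hS.step hv hvT hw hvw hdom) hf'

end RelFoldsTo

lemma Homotopic.exists_seq {V W : Type} {G : LoopGraph V} {H : LoopGraph W} {φ ψ : V → W}
    (h : Homotopic G H φ ψ) :
    ∃ (n : ℕ) (f : ℕ → V → W), f 0 = φ ∧ (∀ t, n ≤ t → f t = ψ) ∧
      ∀ t ⦃x y : V⦄, G.adj x y → H.adj (f t x) (f t y) ∧ H.adj (f t x) (f (t + 1) y) := by
  obtain ⟨n, F, hF, hF0, hFn⟩ := h
  refine ⟨n, fun t x => F (x, ⟨min t n, by omega⟩), funext fun x => ?_,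
    fun t ht => funext fun x => ?_, fun t x y hxy => ⟨hF ⟨hxy, ?_⟩, hF ⟨hxy, ?_⟩⟩⟩
  · simpa using hF0 x
  · simpa [show (⟨min t n, _⟩ : Fin (n + 1)) = Fin.last n from Fin.ext (min_eq_right ht)]
      using hFn x
  · simp [pathI]
  · simp only [pathI]; omega

namespace LoopGraph

variable {V : Type} {G : LoopGraph V} {T : Set V}

variable (G) in
def IsPinned (T : Set V) : Prop :=
  ∀ x ∈ T, ∃ y ∈ T, ∃ y' ∈ T, G.adj x y ∧ G.adj x y' ∧ ∀ z, G.adj z y → G.adj z y' → z = x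

lemma IsPinned.eq_of_seq (hT : G.IsPinned T) {n : ℕ} {f : ℕ → V → V}
    (hn : ∀ t, n ≤ t → f t = id) (hf : ∀ t ⦃x y⦄, G.adj x y → G.adj (f t x) (f (t + 1) y)) :
    ∀ t, ∀ x ∈ T, f t x = x := by
  intro t
  rcases le_total n t with hnt | htn
  · simp [hn t hnt]
  induction htn using Nat.decreasingInduction with
  | self => simp [hn n le_rfl]
  | of_succ t _ ih =>
    intro x hx
    obtain ⟨y, hy, y', hy', hxy, hxy', huniq⟩ := hT x hx
    exact huniq _ (by simpa [ih y hy] using hf t hxy) (by simpa [ih y' hy'] using hf t hxy')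

end LoopGraph

namespace RelFoldsTo

variable {V : Type} {G : LoopGraph V} {R S : Set V}

/-- Tracing the homotopy backwards through the fold retraction keeps `b` at `b`. -/
lemma mem_of_isolated_edge (hS : RelFoldsTo G R S) {r : V → V} (hr : ∀ x, r x ∈ R)
    (hh : Homotopic G G r id) {b c : V} (hb : b ∈ S) (hc : c ∈ S) (hbc : G.adj b c)
    (hbN : ∀ x ∈ S, G.adj b x → x = c) (hcN : ∀ x ∈ S, G.adj c x → x = b) : b ∈ R := by
  obtain ⟨ρ, hρ, hρS, hρfix⟩ := hS.exists_retraction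
  obtain ⟨n, K, hK0, hKn, hK⟩ := hh.exists_seq
  have htrace : ∀ t ≤ n, ρ (K t b) = b ∧ ρ (K t c) = c := by
    intro t ht
    induction ht using Nat.decreasingInduction with
    | self => simp [hKn n le_rfl, hρfix b hb, hρfix c hc]
    | of_succ t _ ih =>
      have hb' := hρ (hK t hbc).2
      have hc' := hρ (hK t (G.symm hbc)).2
      rw [ih.2] at hb'
      rw [ih.1] at hc'
      exact ⟨hcN _ (hρS _) (G.symm hb'), hbN _ (hρS _) (G.symm hc')⟩
  have hb0 := (htrace 0 n.zero_le).1
  rw [hK0, hρfix _ (hS.subset (hr b))] at hb0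
  exact hb0 ▸ hr b

end RelFoldsTo

theorem relFoldsTo_range_of_isHtpyEquiv {C V : Type} [Finite V] {GC : LoopGraph C}
    {G : LoopGraph V} {j : C → V} (hj : IsHtpyEquiv GC G j) (hpin : G.IsPinned (range j)) :
    RelFoldsTo G (range j) (range j) := by
  obtain ⟨-, r, -, -, hjr⟩ := hj
  obtain ⟨n, f, hf0, hfn, hf⟩ := hjr.exists_seq
  refine RelFoldsTo.univ.of_isRelHomotopyOn (n := n) (f := f)
    { mapsTo := fun _ _ => mapsTo_univ _ _
      adjOn := fun t _ _ _ _ _ hxy => (hf t hxy).1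
      adjOn_succ := fun t _ _ _ _ _ hxy => (hf t hxy).2
      fixes := fun t _ => hpin.eq_of_seq hfn (fun t _ _ hxy => (hf t hxy).2) t
      mapsTo_zero := fun x _ => by rw [hf0]; exact mem_range_self _
      eqOn_last := fun x _ => by rw [hfn n le_rfl] }

section HtpyEquiv

variable {U V W X : Type} {GU : LoopGraph U} {G : LoopGraph V} {H : LoopGraph W}
  {K : LoopGraph X}

lemma Homotopic.comp_left {f g : V → W} (h : Homotopic G H f g) {φ : W → X}
    (hφ : IsGraphHom H K φ) : Homotopic G K (φ ∘ f) (φ ∘ g) :=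
  let ⟨n, F, hF, hF0, hFn⟩ := h
  ⟨n, φ ∘ F, fun _ _ hpq => hφ (hF hpq), fun a => congrArg φ (hF0 a), fun a => congrArg φ (hFn a)⟩

lemma Homotopic.comp_right {f g : V → W} (h : Homotopic G H f g) {ψ : U → V}
    (hψ : IsGraphHom GU G ψ) : Homotopic GU H (f ∘ ψ) (g ∘ ψ) :=
  let ⟨n, F, hF, hF0, hFn⟩ := h
  ⟨n, fun p => F (ψ p.1, p.2), fun _ _ hpq => hF ⟨hψ hpq.1, hpq.2⟩, fun a => hF0 (ψ a),
    fun a => hFn (ψ a)⟩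

lemma IsHtpyEquiv.comp_iso {j : V → W} (hj : IsHtpyEquiv G H j) {φ : W → X} {ψ : X → W}
    (hφ : IsGraphHom H K φ) (hψ : IsGraphHom K H ψ) (hψφ : ψ ∘ φ = id) (hφψ : φ ∘ ψ = id) :
    IsHtpyEquiv G K (φ ∘ j) := by
  obtain ⟨hj, r, hr, hrj, hjr⟩ := hj
  refine ⟨fun _ _ h => hφ (hj h), r ∘ ψ, fun _ _ h => hr (hψ h), ?_, ?_⟩
  · rwa [show (r ∘ ψ) ∘ φ ∘ j = r ∘ j from funext fun x => congrArg r (congrFun hψφ (j x))]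
  · simpa [← comp_assoc, hφψ] using (hjr.comp_right hψ).comp_left hφ

end HtpyEquiv

namespace LoopGraph

variable {V A : Type}

def attachPentagons (G : LoopGraph V) (e : A → V) : LoopGraph (V ⊕ A × Fin 5) where
  adj
    | .inl v, .inl w => G.adj v w
    | .inl v, .inr p | .inr p, .inl v => v = e p.1 ∧ (p.2 = 0 ∨ p.2 = 1)
    | .inr p, .inr q => p.1 = q.1 ∧ (p.2 + 1 = q.2 ∨ q.2 + 1 = p.2)
  symm := by
    rintro (v | p) (w | q) h
    exacts [G.symm h, h, h, ⟨h.1.symm, h.2.symm⟩]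

variable {G : LoopGraph V} {e : A → V}

lemma isGraphHom_sumMap {W : Type} {H : LoopGraph W} {f : V → W} (hf : IsGraphHom G H f) :
    IsGraphHom (G.attachPentagons e) (H.attachPentagons (f ∘ e)) (Sum.map f id) := by
  rintro (v | p) (w | q) h
  exacts [hf h, ⟨congrArg f h.1, h.2⟩, ⟨congrArg f h.1, h.2⟩, h]

lemma isPinned_range_sumMap : (G.attachPentagons e).IsPinned (range (Sum.map e id)) := by
  rintro _ ⟨a | ⟨a, k⟩, rfl⟩
  · refine ⟨.inr (a, 0), ⟨.inr (a, 0), rfl⟩, .inr (a, 1), ⟨.inr (a, 1), rfl⟩,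
      ⟨rfl, .inl rfl⟩, ⟨rfl, .inr rfl⟩, ?_⟩
    rintro (v | ⟨a', l⟩) h h'
    · exact congrArg Sum.inl h.1
    · have : ∀ l : Fin 5, (l + 1 = 0 ∨ 0 + 1 = l) → ¬(l + 1 = 1 ∨ 1 + 1 = l) := by decide
      exact absurd h'.2 (this l h.2)
  · refine ⟨.inr (a, k + 1), ⟨.inr (a, k + 1), rfl⟩, .inr (a, k + 4), ⟨.inr (a, k + 4), rfl⟩,
      ⟨rfl, .inl rfl⟩, ⟨rfl, .inr (show k + 4 + 1 = k by revert k; decide)⟩, ?_⟩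
    rintro (v | ⟨a', l⟩) h h'
    · have : ∀ k : Fin 5, (k + 1 = 0 ∨ k + 1 = 1) → ¬(k + 4 = 0 ∨ k + 4 = 1) := by decide
      exact absurd h'.2 (this k h.2)
    · have : ∀ k l : Fin 5, (l + 1 = k + 1 ∨ k + 1 + 1 = l) → (l + 1 = k + 4 ∨ k + 4 + 1 = l) →
          l = k := by decide
      obtain ⟨rfl, hl⟩ := h
      simp [this k l hl h'.2]

end LoopGraph

section Pushout

open LoopGraph

variable {A B : Type} {GA : LoopGraph A} {GB : LoopGraph B} {i : A → B}

def pushoutToAttach (i : A → B) : Pushout i (Sum.inl : A → A ⊕ A × Fin 5) → B ⊕ A × Fin 5 :=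
  Quot.lift (Sum.elim Sum.inl (Sum.map i id)) (by rintro _ _ ⟨a, rfl, rfl⟩; rfl)

def attachToPushout (i : A → B) : B ⊕ A × Fin 5 → Pushout i (Sum.inl : A → A ⊕ A × Fin 5) :=
  Quot.mk _ ∘ Sum.map id Sum.inr

lemma attachToPushout_comp_pushoutToAttach : attachToPushout i ∘ pushoutToAttach i = id := by
  funext x
  induction x using Quot.ind with
  | mk x =>
    rcases x with b | a | y
    exacts [rfl, Quot.sound ⟨a, rfl, rfl⟩, rfl]

lemma pushoutToAttach_comp_attachToPushout : pushoutToAttach i ∘ attachToPushout i = id := by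
  funext x
  rcases x with b | y <;> rfl

lemma pushoutToAttach_comp_cobase : pushoutToAttach i ∘ cobase i Sum.inl = Sum.map i id := by
  funext x
  rcases x with a | y <;> rfl

lemma isGraphHom_pushoutToAttach (hi : IsGraphHom GA GB i) :
    IsGraphHom (pushoutGraph GB (GA.attachPentagons id) i Sum.inl) (GB.attachPentagons i)
      (pushoutToAttach i) := by
  rintro _ _ ⟨_, _, rfl, rfl, ⟨b, b', rfl, rfl, h⟩ | ⟨c, c', rfl, rfl, h⟩⟩
  exacts [h, isGraphHom_sumMap hi h]

lemma isGraphHom_attachToPushout :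
    IsGraphHom (GB.attachPentagons i) (pushoutGraph GB (GA.attachPentagons id) i Sum.inl)
      (attachToPushout i) := by
  rintro (b | ⟨a, k⟩) (b' | ⟨a', k'⟩) h
  · exact ⟨_, _, rfl, rfl, .inl ⟨b, b', rfl, rfl, h⟩⟩
  · obtain ⟨rfl, hk⟩ := h
    exact ⟨.inr (.inl a'), _, (Quot.sound ⟨a', rfl, rfl⟩).symm, rfl, .inr ⟨_, _, rfl, rfl, rfl, hk⟩⟩
  · obtain ⟨rfl, hk⟩ := h
    exact ⟨_, .inr (.inl a), rfl, (Quot.sound ⟨a, rfl, rfl⟩).symm, .inr ⟨_, _, rfl, rfl, rfl, hk⟩⟩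
  · exact ⟨_, _, rfl, rfl, .inr ⟨_, _, rfl, rfl, h⟩⟩

lemma IsHtpyEquiv.sumMap_of_cobase (hi : IsGraphHom GA GB i)
    (h : IsHtpyEquiv (GA.attachPentagons id) (pushoutGraph GB (GA.attachPentagons id) i Sum.inl)
      (cobase i Sum.inl)) :
    IsHtpyEquiv (GA.attachPentagons id) (GB.attachPentagons i) (Sum.map i id) :=
  pushoutToAttach_comp_cobase ▸ h.comp_iso (isGraphHom_pushoutToAttach hi)
    isGraphHom_attachToPushout attachToPushout_comp_pushoutToAttach
    pushoutToAttach_comp_attachToPushout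

end Pushout

lemma preimage_inl_range_sumMap {α β γ δ : Type} (f : α → β) (g : γ → δ) :
    Sum.inl ⁻¹' range (Sum.map f g) = range f := by
  ext; simp

namespace RelFoldsTo

variable {V A : Type} {G : LoopGraph V} {e : A → V}

/-- A fold removing `b` is replaced by a fold of `G` itself; the only obstruction, `b` folding
into a pentagon at `e a` with `b (e a)` an isolated edge, is excluded by `e ∘ g ≃ id`. -/
lemma preimage_inl {S : Set (V ⊕ A × Fin 5)}
    (hS : RelFoldsTo (G.attachPentagons e) (range (Sum.map e id)) S) {g : V → A}
    (hg : Homotopic G G (e ∘ g) id) : RelFoldsTo G (range e) (Sum.inl ⁻¹' S) := by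
  induction hS with
  | univ => exact univ
  | @step S v w _ hv hvT hw hvw hdom ih =>
    obtain b | p := v
    swap
    · exact absurd ⟨.inr p, rfl⟩ hvT
    have hb : b ∉ range e := fun ⟨a, ha⟩ => hvT ⟨.inl a, by simp [ha]⟩
    have hdiff : Sum.inl ⁻¹' (S \ {Sum.inl b}) = Sum.inl ⁻¹' S \ {b} := by ext; simp
    rw [hdiff]
    suffices ∃ c ∈ Sum.inl ⁻¹' S, b ≠ c ∧ ∀ x ∈ Sum.inl ⁻¹' S, G.adj b x → G.adj c x by
      obtain ⟨c, hc, hbc, hdom⟩ := this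
      exact ih.step hv hb hc hbc hdom
    obtain c | ⟨a, k⟩ := w
    · exact ⟨c, hw, fun h => hvw (congrArg Sum.inl h), fun x hx => hdom (.inl x) hx⟩
    have hN : ∀ x ∈ Sum.inl ⁻¹' S, G.adj b x → x = e a := fun x hx hbx => (hdom (.inl x) hx hbx).1
    have hea : e a ∈ Sum.inl ⁻¹' S := ih.subset ⟨a, rfl⟩
    by_cases hba : G.adj b (e a)
    · by_contra hnone
      refine hb (ih.mem_of_isolated_edge (fun x => ⟨g x, rfl⟩) hg hv hea hba hN fun x hx hx' => ?_)
      by_contra hxb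
      exact hnone ⟨x, hx, Ne.symm hxb, fun y hy hby => hN y hy hby ▸ G.symm hx'⟩
    · exact ⟨e a, hea, fun h => hb ⟨a, h.symm⟩, fun x hx hbx => absurd (hN x hx hbx ▸ hbx) hba⟩

end RelFoldsTo

theorem stmt14_general {A B : Type} [Fintype A] [Fintype B] (GA : LoopGraph A) (GB : LoopGraph B)
    (i : A → B)
    (hhe : IsHtpyEquiv GA GB i)
    (hnofold : ¬ RelFoldsTo GB (Set.range i) (Set.range i)) :
    ∃ (C : Type) (GC : LoopGraph C) (f : A → C), IsGraphHom GA GC f ∧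
      ¬ IsHtpyEquiv GC (pushoutGraph GB GC i f) (cobase i f) := by
  obtain ⟨hi, g, -, -, hig⟩ := hhe
  refine ⟨_, GA.attachPentagons id, Sum.inl, fun _ _ h => h, fun hcobase => hnofold ?_⟩
  have hfold := relFoldsTo_range_of_isHtpyEquiv (hcobase.sumMap_of_cobase hi)
    LoopGraph.isPinned_range_sumMap
  simpa [preimage_inl_range_sumMap] using hfold.preimage_inl hig

/-- if `i : A → B` is an induced subgraph inclusion and a ×-homotopy equivalence
of finite graphs with `|V(A)| < |V(B)|`, and `B` cannot be reduced to `A` by relative folds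
with respect to `A`, then some cobase change of `i` fails to be a ×-homotopy equivalence. -/
theorem stmt14 {A B : Type} [Fintype A] [Fintype B] (GA : LoopGraph A) (GB : LoopGraph B)
    (i : A → B)
    (hind : Function.Injective i ∧ ∀ a a' : A, GA.adj a a' ↔ GB.adj (i a) (i a'))
    (hhe : IsHtpyEquiv GA GB i)
    (hcard : Fintype.card A < Fintype.card B)
    (hnofold : ¬ RelFoldsTo GB (Set.range i) (Set.range i)) :
    ∃ (C : Type) (GC : LoopGraph C) (f : A → C), IsGraphHom GA GC f ∧
      ¬ IsHtpyEquiv GC (pushoutGraph GB GC i f) (cobase i f) :=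
  stmt14_general GA GB i hhe hnofold
end

section
/- Let t ≥ 2 and let B be a finite connected non-bipartite graph (i.e. B contains a closed walk of odd length) whose diameter is at most t − 2. Then for every edge b₁b₂ ∈ E(B) there is no graph map F : B → L_t with F(b₁) = t and F(b₂) = t − 1. -/
/-!
Moving along an edge of `L_t` changes the value by at most one, so a walk of length `m ≤ t - 2`
from `b₁` (where `F = t`) ends at a value `≥ 2`. Hence `F` never reaches the looped vertex `0`,
where it could stay put; everywhere else each edge of `L_t` changes the parity of the value. The
parity of `F` would then alternate along the odd closed walk of `B`, which is impossible.
-/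

section Walk

variable {V : Type} {R : V → V → Prop} {f : V → ℕ} {m : ℕ} {c : ℕ → V}

lemma le_add_length_of_walk (hf : ∀ x y, R x y → f x ≤ f y + 1)
    (hc : ∀ j < m, R (c j) (c (j + 1))) : f (c 0) ≤ f (c m) + m := by
  induction m with
  | zero => rfl
  | succ m ih =>
    have hstep := hf _ _ (hc m m.lt_succ_self)
    have := ih fun j hj => hc j (Nat.lt_succ_of_lt hj)
    omega

lemma mod_two_of_walk (hf : ∀ x y, R x y → f x % 2 ≠ f y % 2)
    (hc : ∀ j < m, R (c j) (c (j + 1))) : f (c m) % 2 = (f (c 0) + m) % 2 := by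
  induction m with
  | zero => rfl
  | succ m ih =>
    have hstep := hf _ _ (hc m m.lt_succ_self)
    have := ih fun j hj => hc j (Nat.lt_succ_of_lt hj)
    omega

lemma not_odd_closed_walk (hf : ∀ x y, R x y → f x % 2 ≠ f y % 2) (k : ℕ)
    (hcl : c 0 = c (2 * k + 1)) (hc : ∀ j < 2 * k + 1, R (c j) (c (j + 1))) : False := by
  have := mod_two_of_walk hf hc
  rw [← hcl] at this
  omega

end Walk

namespace Lgraph

variable {t : ℕ} {x y : Fin (t + 1)}

lemma val_le_succ_of_adj (h : (Lgraph t).adj x y) : (x : ℕ) ≤ y + 1 := by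
  rcases h with (h | h) | ⟨h, -⟩ <;> omega

lemma val_mod_two_ne_of_adj (h : (Lgraph t).adj x y) (hx : (x : ℕ) ≠ 0) :
    (x : ℕ) % 2 ≠ (y : ℕ) % 2 := by
  rcases h with (h | h) | ⟨h, -⟩ <;> omega

end Lgraph

theorem stmt16_general (t : ℕ) (ht : 2 ≤ t) {V : Type} (GB : LoopGraph V)
    (hodd : ∃ (k : ℕ) (c : ℕ → V), c 0 = c (2 * k + 1) ∧
      ∀ j < 2 * k + 1, GB.adj (c j) (c (j + 1)))
    (hdiam : ∀ x y : V, ∃ (m : ℕ) (c : ℕ → V), m ≤ t - 2 ∧ c 0 = x ∧ c m = y ∧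
      ∀ j < m, GB.adj (c j) (c (j + 1)))
    (b₁ b₂ : V) :
    ¬ ∃ F : V → Fin (t + 1), IsGraphHom GB (Lgraph t) F ∧
      (F b₁ : ℕ) = t ∧ (F b₂ : ℕ) = t - 1 := by
  rintro ⟨F, hF, hF₁, -⟩
  have hF_ne_zero (y : V) : (F y : ℕ) ≠ 0 := by
    obtain ⟨m, c, hm, rfl, rfl, hc⟩ := hdiam b₁ y
    have := le_add_length_of_walk (f := fun v => (F v : ℕ))
      (fun _ _ h => Lgraph.val_le_succ_of_adj (hF h)) hc
    omega
  obtain ⟨k, c, hcl, hc⟩ := hodd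
  exact not_odd_closed_walk (f := fun v => (F v : ℕ))
    (fun x _ h => Lgraph.val_mod_two_ne_of_adj (hF h) (hF_ne_zero x)) k hcl hc

/-- if `t ≥ 2` and `B` is a finite connected non-bipartite graph of diameter at
most `t - 2`, then for any edge `b₁b₂` of `B` there is no graph map `F : B → L_t` with
`F b₁ = t` and `F b₂ = t - 1`. -/
theorem stmt16 (t : ℕ) (ht : 2 ≤ t) {V : Type} [Fintype V] (GB : LoopGraph V)
    (hconn : GB.Connected)
    (hodd : ∃ (k : ℕ) (c : ℕ → V), c 0 = c (2 * k + 1) ∧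
      ∀ j < 2 * k + 1, GB.adj (c j) (c (j + 1)))
    (hdiam : ∀ x y : V, ∃ (m : ℕ) (c : ℕ → V), m ≤ t - 2 ∧ c 0 = x ∧ c m = y ∧
      ∀ j < m, GB.adj (c j) (c (j + 1)))
    (b₁ b₂ : V) (hb : GB.adj b₁ b₂) :
    ¬ ∃ F : V → Fin (t + 1), IsGraphHom GB (Lgraph t) F ∧
      (F b₁ : ℕ) = t ∧ (F b₂ : ℕ) = t - 1 :=
  stmt16_general t ht GB hodd hdiam b₁ b₂
end
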